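/- The DFS walk w on a plane rooted tree admits the iterative characterization: w_0 = r (the root), w_1 is the first child of r, and for all k ≥ 2, w_k = next(w_{k−2}, w_{k−1}), where next(i, j) is the successor of i in the local order at j among neighbors of j (with the convention 'parent last') if i is a child of j, and the first neighbor of j if i is the parent of j. -/

import Mathlib

/-! At a vertex `v` with neighbour list `c₁ … cₘ p`, the walk arrives from `p`, makes the
excursion `dfs` into the subtree at `c₁`, comes back from `c₁`, goes down to `c₂`, …, and finally
leaves towards `p`. Hence every window `(a, v, b)` of the walk centred at `v` has `b` right after
`a` in the neighbour list of `v` read cyclically (the parent, listed last, is followed by the first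
child), and the windows centred elsewhere lie in the walk `v dfs(t) v` of a subtree. Induction on
the tree, gluing walks that overlap in two entries, gives the claim; distinct labels make the
neighbour table a function of the vertex. -/

/-- A plane rooted tree: a root label together with an ordered list of subtrees. -/
inductive PTree (V : Type) : Type
  | node : V → List (PTree V) → PTree V

namespace PTree

variable {V : Type}

/-- The root label of a plane rooted tree. -/
def root : PTree V → V
  | node v _ => v

/-- The depth-first-search walk: `dfs (node v [t₁,…,tₘ]) = v dfs(t₁) v … v dfs(tₘ) v`. -/
def dfs : PTree V → List V
  | node v ts => v :: (ts.attach.map (fun t => dfs t.1 ++ [v])).flatten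
decreasing_by simp only [PTree.node.sizeOf_spec]; have := List.sizeOf_lt_of_mem t.2; omega

/-- The list of vertex labels of a plane rooted tree. -/
def verts : PTree V → List V
  | node v ts => v :: (ts.attach.map (fun t => verts t.1)).flatten
decreasing_by simp only [PTree.node.sizeOf_spec]; have := List.sizeOf_lt_of_mem t.2; omega

/-- For each vertex, its ordered list of neighbours: the children in the plane order,
followed (last) by the parent, given as `p` for the current root. -/
def nbrsMap : Option V → PTree V → List (V × List V)
  | p, node v ts =>
      (v, ts.map root ++ p.toList) ::
        (ts.attach.map (fun t => nbrsMap (some v) t.1)).flatten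
decreasing_by simp only [PTree.node.sizeOf_spec]; have := List.sizeOf_lt_of_mem t.2; omega

section IsChain₃

variable {α : Type*} {R : α → α → α → Prop}

def _root_.List.IsChain₃ (R : α → α → α → Prop) : List α → Prop
  | a :: b :: c :: l => R a b c ∧ List.IsChain₃ R (b :: c :: l)
  | _ => True

open List

@[simp] lemma _root_.List.isChain₃_singleton (a : α) : IsChain₃ R [a] := trivial

@[simp] lemma _root_.List.isChain₃_pair (a b : α) : IsChain₃ R [a, b] := trivial

@[simp] lemma _root_.List.isChain₃_cons_cons_cons {a b c : α} {l : List α} :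
    IsChain₃ R (a :: b :: c :: l) ↔ R a b c ∧ IsChain₃ R (b :: c :: l) := Iff.rfl

lemma _root_.List.isChain₃_cons_cons {a b : α} {l : List α} :
    IsChain₃ R (a :: b :: l) ↔ (∀ c ∈ l.head?, R a b c) ∧ IsChain₃ R (b :: l) := by
  cases l <;> simp

lemma _root_.List.IsChain₃.tail {a : α} {l : List α} (h : IsChain₃ R (a :: l)) :
    IsChain₃ R l := by
  match l, h with
  | [], _ => trivial
  | [_], _ => trivial
  | _ :: _ :: _, h => exact h.2

lemma _root_.List.IsChain₃.append_of_overlap {l₁ l₂ : List α} {a b : α}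
    (h₁ : IsChain₃ R (l₁ ++ [a, b])) (h₂ : IsChain₃ R (a :: b :: l₂)) :
    IsChain₃ R (l₁ ++ a :: b :: l₂) := by
  induction l₁ with
  | nil => exact h₂
  | cons x l₁ ih =>
    specialize ih h₁.tail
    rcases l₁ with _ | ⟨y, _ | ⟨z, l₁⟩⟩ <;> simp_all

lemma _root_.List.IsChain₃.rel_of_getElem? {l : List α} (h : IsChain₃ R l) {k : ℕ} {a b c : α}
    (ha : l[k]? = some a) (hb : l[k + 1]? = some b) (hc : l[k + 2]? = some c) : R a b c := by
  induction l generalizing k with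
  | nil => simp at ha
  | cons x l ih =>
    cases k with
    | zero => rcases l with _ | ⟨y, _ | ⟨z, l⟩⟩ <;> simp_all
    | succ k =>
      simp only [List.getElem?_cons_succ] at ha hb hc
      exact ih h.tail ha hb hc

end IsChain₃

lemma _root_.List.cons_flatten_map_append_singleton {α β : Type*} (a : α) (f : β → List α)
    (L : List β) :
    a :: (L.map (fun x => f x ++ [a])).flatten = (L.map (fun x => a :: f x)).flatten ++ [a] := by
  induction L with
  | nil => rfl
  | cons l L ih => simp [← ih]

lemma dfs_node (v : V) (ts : List (PTree V)) :
    dfs (node v ts) = v :: (ts.map (fun t => dfs t ++ [v])).flatten := by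
  rw [dfs]; congr 1; simp

lemma verts_node (v : V) (ts : List (PTree V)) :
    verts (node v ts) = v :: (ts.map verts).flatten := by
  rw [verts]; congr 1; simp

lemma nbrsMap_node (p : Option V) (v : V) (ts : List (PTree V)) :
    nbrsMap p (node v ts) =
      (v, ts.map root ++ p.toList) :: (ts.map (nbrsMap (some v))).flatten := by
  rw [nbrsMap]; congr 1; simp

lemma exists_dfs_eq_root_cons (t : PTree V) : ∃ l, dfs t = root t :: l := by
  obtain ⟨v, ts⟩ := t
  exact ⟨_, dfs_node v ts⟩

lemma exists_dfs_eq_append_root (t : PTree V) : ∃ l, dfs t = l ++ [root t] := by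
  obtain ⟨v, ts⟩ := t
  exact ⟨_, (dfs_node v ts).trans (List.cons_flatten_map_append_singleton v dfs ts)⟩

lemma map_fst_nbrsMap : ∀ (p : Option V) (t : PTree V),
    (nbrsMap p t).map Prod.fst = verts t
  | p, node v ts => by
    rw [nbrsMap_node, verts_node]
    simp only [List.map_cons, List.map_flatten, List.map_map]
    congr 2
    exact List.map_congr_left fun t ht => map_fst_nbrsMap (some v) t
decreasing_by simp only [PTree.node.sizeOf_spec]; have := List.sizeOf_lt_of_mem ht; omega

lemma map_root_sublist_flatten_verts (ts : List (PTree V)) :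
    (ts.map root).Sublist (ts.map verts).flatten := by
  induction ts with
  | nil => simp
  | cons t ts ih =>
    obtain ⟨v, us⟩ := t
    simpa [verts_node, root] using ih.trans (List.sublist_append_right _ _)

lemma nodup_map_root {v : V} {ts : List (PTree V)} (h : (verts (node v ts)).Nodup) :
    (ts.map root).Nodup := by
  rw [verts_node] at h
  exact h.of_cons.sublist (map_root_sublist_flatten_verts ts)

lemma nodup_cons_verts_of_mem {v : V} {ts : List (PTree V)} (h : (verts (node v ts)).Nodup)
    {t : PTree V} (ht : t ∈ ts) : (v :: verts t).Nodup := by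
  rw [verts_node] at h
  exact h.sublist ((List.sublist_flatten_of_mem (List.mem_map_of_mem ht)).cons_cons v)

lemma nodup_map_root_append_singleton {q v : V} {ts : List (PTree V)}
    (h : (q :: verts (node v ts)).Nodup) : (ts.map root ++ [q]).Nodup := by
  rw [List.nodup_append_comm, verts_node] at *
  exact h.sublist (((map_root_sublist_flatten_verts ts).trans
    (List.sublist_cons_self v _)).cons_cons q)

def ExtendsNbrsMap (nb : V → List V) (p : Option V) (t : PTree V) : Prop :=
  ∀ e ∈ nbrsMap p t, nb e.1 = e.2

section ExtendsNbrsMap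

variable {nb : V → List V} {p : Option V} {v : V} {ts : List (PTree V)}

lemma ExtendsNbrsMap.apply_root (h : ExtendsNbrsMap nb p (node v ts)) :
    nb v = ts.map root ++ p.toList :=
  h _ (by rw [nbrsMap_node]; exact List.mem_cons_self)

lemma ExtendsNbrsMap.of_mem (h : ExtendsNbrsMap nb p (node v ts)) {t : PTree V} (ht : t ∈ ts) :
    ExtendsNbrsMap nb (some v) t :=
  fun e he => h e (by
    rw [nbrsMap_node]
    exact List.mem_cons_of_mem _ (List.mem_flatten.2 ⟨_, List.mem_map_of_mem ht, he⟩))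

end ExtendsNbrsMap

/-- `x` is the neighbour from which the walk first arrives at `v`. -/
lemma isChain₃_excursions {R : V → V → V → Prop} {v : V} (p : Option V) :
    ∀ (ts : List (PTree V)) (x : V), (∀ t ∈ ts, List.IsChain₃ R (v :: dfs t ++ [v])) →
    (x :: ts.map root ++ p.toList).IsChain (fun a b => R a v b) →
    List.IsChain₃ R (x :: v :: (ts.map (fun t => dfs t ++ [v])).flatten ++ p.toList)
  | [], x, _, hchain => by cases p <;> simp_all
  | t :: ts, x, hwalks, hchain => by
    obtain ⟨d₁, hd₁⟩ := exists_dfs_eq_root_cons t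
    obtain ⟨d₂, hd₂⟩ := exists_dfs_eq_append_root t
    simp only [List.map_cons, List.cons_append, List.isChain_cons_cons] at hchain
    have hleft : List.IsChain₃ R ((x :: v :: d₂) ++ [root t, v]) := by
      have h : List.IsChain₃ R (x :: v :: (dfs t ++ [v])) :=
        List.isChain₃_cons_cons.2 ⟨by simpa [hd₁] using hchain.1, hwalks t List.mem_cons_self⟩
      simpa [hd₂] using h
    have hright := isChain₃_excursions p ts (root t)
      (fun t' ht' => hwalks t' (List.mem_cons_of_mem _ ht')) hchain.2
    simpa [hd₂] using hleft.append_of_overlap hright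

variable [DecidableEq V]

/-- The ordered neighbour list of a vertex `y` (children first, parent last). -/
def nbrsOf (t : PTree V) (y : V) : List V :=
  (((nbrsMap none t).lookup y).getD [])

/-- `next i j` : the cyclic successor of `i` in the neighbour list of `j` (children in
the plane order, then the parent last); so it is the successor of `i` in the local
order at `j` when `i` is a child of `j`, and the first neighbour of `j` when `i` is
the parent of `j`. -/
def nextNbr (t : PTree V) (i j : V) : Option V :=
  (nbrsOf t j)[(List.idxOf i (nbrsOf t j) + 1) % (nbrsOf t j).length]?

def _root_.List.cycSucc (l : List V) (a : V) : Option V :=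
  l[(l.idxOf a + 1) % l.length]?

lemma nextNbr_eq_cycSucc (t : PTree V) (i j : V) : nextNbr t i j = (nbrsOf t j).cycSucc i := rfl

lemma _root_.List.Nodup.cycSucc_getElem {l : List V} (hl : l.Nodup) {i : ℕ} (hi : i < l.length) :
    l.cycSucc l[i] = l[(i + 1) % l.length]? := by
  rw [List.cycSucc, hl.idxOf_getElem]

lemma _root_.List.Nodup.isChain_cycSucc_getLast_cons {l : List V} (hl : l.Nodup) (hne : l ≠ []) :
    (l.getLast hne :: l).IsChain (fun a b => l.cycSucc a = some b) := by
  have hpos : 0 < l.length := List.length_pos_iff.2 hne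
  rw [List.isChain_cons, List.isChain_iff_getElem, List.getLast_eq_getElem,
    hl.cycSucc_getElem, Nat.sub_add_cancel hpos, Nat.mod_self]
  refine ⟨fun c hc => by rwa [List.head?_eq_getElem?] at hc, fun i hi => ?_⟩
  rw [hl.cycSucc_getElem, Nat.mod_eq_of_lt hi, List.getElem?_eq_getElem hi]

lemma _root_.List.lookup_eq_some_of_mem {α β : Type*} [DecidableEq α] {l : List (α × β)}
    (hl : (l.map Prod.fst).Nodup) {a : α} {b : β} (h : (a, b) ∈ l) : l.lookup a = some b := by
  obtain ⟨l₁, l₂, rfl⟩ := List.append_of_mem h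
  refine List.lookup_eq_some_iff.2 ⟨l₁, l₂, rfl, fun e he => ?_⟩
  simp only [List.map_append, List.map_cons, List.nodup_append, List.mem_cons] at hl
  simpa using fun hae => hl.2.2 _ (List.mem_map_of_mem he) a (.inl rfl) hae.symm

lemma isChain₃_parent_dfs_parent {nb : V → List V} : ∀ (q : V) (t : PTree V),
    ExtendsNbrsMap nb (some q) t → (q :: verts t).Nodup →
    List.IsChain₃ (fun a b c => (nb b).cycSucc a = some c) (q :: dfs t ++ [q])
  | q, node v ts, hext, hnd => by
    have hv : nb v = ts.map root ++ [q] := hext.apply_root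
    have hchain := (nodup_map_root_append_singleton hnd).isChain_cycSucc_getLast_cons (by simp)
    rw [List.getLast_append_singleton] at hchain
    rw [dfs_node, List.cons_append]
    refine isChain₃_excursions (some q) ts q (fun t ht => ?_) (by simpa [hv] using hchain)
    exact isChain₃_parent_dfs_parent v t (hext.of_mem ht)
      (nodup_cons_verts_of_mem hnd.of_cons ht)
decreasing_by simp only [PTree.node.sizeOf_spec]; have := List.sizeOf_lt_of_mem ht; omega

lemma isChain₃_dfs {nb : V → List V} {r : V} {ts : List (PTree V)}
    (hext : ExtendsNbrsMap nb none (node r ts)) (hnd : (verts (node r ts)).Nodup) :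
    List.IsChain₃ (fun a b c => (nb b).cycSucc a = some c) (dfs (node r ts)) := by
  rcases eq_or_ne ts [] with rfl | hts
  · simp [dfs_node]
  have hr : nb r = ts.map root := by simpa using hext.apply_root
  have hne : ts.map root ≠ [] := by simpa using hts
  have hchain := (nodup_map_root hnd).isChain_cycSucc_getLast_cons hne
  have := isChain₃_excursions none ts _ (fun t ht => isChain₃_parent_dfs_parent r t
    (hext.of_mem ht) (nodup_cons_verts_of_mem hnd ht)) (by simpa [hr] using hchain)
  rw [dfs_node]
  simpa using this.tail

lemma extendsNbrsMap_nbrsOf {t : PTree V} (hnd : (verts t).Nodup) :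
    ExtendsNbrsMap (nbrsOf t) none t :=
  fun e he => by
    rw [nbrsOf, List.lookup_eq_some_of_mem (by rwa [map_fst_nbrsMap]) he]
    rfl

theorem dfs_iterative_general (r : V) (ts : List (PTree V))
    (hnd : (verts (node r ts)).Nodup) :
    (dfs (node r ts))[0]? = some r ∧
    (dfs (node r ts))[1]? = (nbrsOf (node r ts) r)[0]? ∧
    ∀ (k : ℕ) (x y z : V),
      (dfs (node r ts))[k]? = some x →
      (dfs (node r ts))[k + 1]? = some y →
      (dfs (node r ts))[k + 2]? = some z →
      nextNbr (node r ts) x y = some z := by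
  refine ⟨by simp [dfs_node], ?_, fun k x y z hx hy hz => ?_⟩
  · have hr : nbrsOf (node r ts) r = ts.map root := by simp [nbrsOf, nbrsMap_node]
    rcases ts with _ | ⟨t, ts⟩
    · simp [dfs_node, hr]
    · obtain ⟨l, hl⟩ := exists_dfs_eq_root_cons t
      simp [dfs_node, hr, hl]
  · rw [nextNbr_eq_cycSucc]
    exact (isChain₃_dfs (extendsNbrsMap_nbrsOf hnd) hnd).rel_of_getElem? hx hy hz

/-- The iterative characterization of the DFS walk: `w₀` is the root, `w₁` the first
child of the root, and each subsequent vertex is `next(w_{k-2}, w_{k-1})`. -/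
theorem dfs_iterative (r : V) (ts : List (PTree V)) (hts : ts ≠ [])
    (hnd : (verts (node r ts)).Nodup) :
    (dfs (node r ts))[0]? = some r ∧
    (dfs (node r ts))[1]? = (nbrsOf (node r ts) r)[0]? ∧
    ∀ (k : ℕ) (x y z : V),
      (dfs (node r ts))[k]? = some x →
      (dfs (node r ts))[k + 1]? = some y →
      (dfs (node r ts))[k + 2]? = some z →
      nextNbr (node r ts) x y = some z :=
  dfs_iterative_general r ts hnd

end PTree
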